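/- arXiv:0812.4549 — 2 statements merged into one kernel-verified Lean document; each statement's English description precedes it below -/
import Mathlib

section
/- (Generalized Newton–Maclaurin inequality) For λ ∈ Γ_k and integers satisfying 0 ≤ s < r, 0 ≤ l < k, r ≤ k, s ≤ l, one has (S_k(λ)/S_l(λ))^{1/(k-l)} ≤ (S_r(λ)/S_s(λ))^{1/(r-s)}. -/
/-- Normalized `k`-th elementary symmetric function on `ℝⁿ`. -/
noncomputable def S (n k : ℕ) (x : Fin n → ℝ) : ℝ :=
  (∑ t ∈ Finset.univ.powersetCard k, ∏ i ∈ t, x i) / (n.choose k : ℝ)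

/-- The `k`-positive (Gårding) cone `Γ_k ⊆ ℝⁿ`. -/
def Gamma (n k : ℕ) : Set (Fin n → ℝ) :=
  {x | ∀ j, 1 ≤ j → j ≤ k → 0 < S n j x}

open Finset Polynomial

lemma S_eq_esymm (n j : ℕ) (x : Fin n → ℝ) :
    S n j x = (Multiset.map x Finset.univ.val).esymm j / (n.choose j : ℝ) := by
  rw [S, Finset.esymm_map_val]

lemma S_zero (n : ℕ) (x : Fin n → ℝ) : S n 0 x = 1 := by simp [S]

lemma S_one (n : ℕ) (x : Fin n → ℝ) : S n 1 x = (∑ i, x i) / n := by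
  simp [S, Finset.powersetCard_one, Finset.sum_map]

lemma S_top (n : ℕ) (x : Fin n → ℝ) : S n n x = ∏ i, x i := by
  have h : Finset.powersetCard n (Finset.univ : Finset (Fin n)) = {Finset.univ} := by
    have := Finset.powersetCard_self (Finset.univ : Finset (Fin n))
    simpa using this
  rw [S, h]
  simp

/-- Every real multiset of card `n` comes from a function on `Fin n`. -/
lemma exists_fin_fun (M : Multiset ℝ) (n : ℕ) (h : Multiset.card M = n) :
    ∃ x : Fin n → ℝ, M = Multiset.map x Finset.univ.val := by
  subst h
  refine ⟨fun i => M.toList.get (Fin.cast (by simp) i), ?_⟩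
  have hl : (Finset.univ.val : Multiset (Fin (Multiset.card M)))
      = ↑(List.finRange (Multiset.card M)) := rfl
  rw [hl, Multiset.map_coe]
  conv_lhs => rw [← M.coe_toList]
  congr 1
  apply List.ext_getElem
  · simp
  · intro i h1 h2
    simp

/-- The key polynomial (Rolle) step: normalized elementary symmetric functions are
preserved when passing to the roots of the derivative. -/
lemma deriv_step (n : ℕ) (hn : 1 ≤ n) (x : Fin n → ℝ) :
    ∃ y : Fin (n - 1) → ℝ, ∀ j, j ≤ n - 1 → S (n - 1) j y = S n j x := by
  classical
  set M : Multiset ℝ := Multiset.map x Finset.univ.val with hM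
  have hcard : Multiset.card M = n := by simp [hM]
  set p : ℝ[X] := (M.map fun a => X + C a).prod with hp
  have hmonic : p.Monic := monic_multiset_prod_of_monic _ _ (fun a _ => monic_X_add_C a)
  have hdeg : p.natDegree = n := by
    rw [hp, natDegree_multiset_prod_of_monic _ (by
      intro f hf
      obtain ⟨a, _, rfl⟩ := Multiset.mem_map.mp hf
      exact monic_X_add_C a)]
    rw [Multiset.map_map]
    simp [Function.comp, hcard]
  have hproots : p.roots = M.map (fun a => -a) := by
    have h2 : ((M.map (fun a => -a)).map (fun a => X - C a)) = (M.map fun a => X + C a) := by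
      rw [Multiset.map_map]
      exact Multiset.map_congr rfl (fun a _ => by simp [sub_neg_eq_add])
    rw [hp, ← h2, roots_multiset_prod_X_sub_C]
  have hprootscard : Multiset.card p.roots = n := by rw [hproots]; simp [hcard]
  set q := derivative p with hq
  have hcast : ((n - 1 : ℕ) : ℝ) + 1 = (n : ℝ) := by
    rw [Nat.cast_sub hn]; ring
  have hqcoeff : q.coeff (n - 1) = (n : ℝ) := by
    rw [hq, coeff_derivative]
    rw [Nat.sub_add_cancel hn, ← hdeg, hmonic.coeff_natDegree, one_mul, hdeg, hcast]
  have hqne : q.coeff (n - 1) ≠ 0 := by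
    rw [hqcoeff]
    exact_mod_cast (Nat.cast_pos.mpr hn).ne'
  have hqdeg : q.natDegree = n - 1 := le_antisymm
    (by have h := natDegree_derivative_le p; rw [hdeg] at h; exact h)
    (le_natDegree_of_ne_zero hqne)
  have hqlead : q.leadingCoeff = (n : ℝ) := by rw [leadingCoeff, hqdeg, hqcoeff]
  have hqroots : Multiset.card q.roots = n - 1 := by
    have h1 : Multiset.card p.roots ≤ Multiset.card q.roots + 1 := p.card_roots_le_derivative
    have h2 : Multiset.card q.roots ≤ q.natDegree := q.card_roots'
    omega
  have hfact : C q.leadingCoeff * (q.roots.map fun a => X - C a).prod = q :=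
    C_leadingCoeff_mul_prod_multiset_X_sub_C (by rw [hqroots, hqdeg])
  set M' : Multiset ℝ := q.roots.map (fun a => -a) with hM'
  have hcard' : Multiset.card M' = n - 1 := by simp [hM', hqroots]
  have hfact' : q = C (n : ℝ) * (M'.map fun a => X + C a).prod := by
    conv_lhs => rw [← hfact]
    rw [hqlead, hM', Multiset.map_map]
    exact congrArg (HMul.hMul (C ((n : ℕ) : ℝ)))
      (congrArg Multiset.prod (Multiset.map_congr rfl (fun a _ => by simp [sub_eq_add_neg])))
  have key : ∀ j, j ≤ n - 1 → (n : ℝ) * M'.esymm j = ((n - j : ℕ) : ℝ) * M.esymm j := by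
    intro j hj
    have h1 : q.coeff (n - 1 - j) = (n : ℝ) * M'.esymm j := by
      rw [hfact', coeff_C_mul,
        Multiset.prod_X_add_C_coeff M' (show n - 1 - j ≤ Multiset.card M' by omega)]
      rw [hcard']
      congr 2
      omega
    have h3 : p.coeff (n - j) = M.esymm j := by
      rw [hp, Multiset.prod_X_add_C_coeff M (show n - j ≤ Multiset.card M by omega)]
      rw [hcard]
      congr 1
      omega
    have h2 : q.coeff (n - 1 - j) = ((n - j : ℕ) : ℝ) * M.esymm j := by
      rw [hq, coeff_derivative]
      have e1 : n - 1 - j + 1 = n - j := by omega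
      have e2 : ((n - 1 - j : ℕ) : ℝ) + 1 = ((n - j : ℕ) : ℝ) := by
        have : (n - 1 - j) + 1 = n - j := by omega
        exact_mod_cast congrArg (Nat.cast : ℕ → ℝ) this
      rw [e1, h3, e2, mul_comm]
    rw [← h1, h2]
  obtain ⟨y, hy⟩ := exists_fin_fun M' (n - 1) hcard'
  refine ⟨y, fun j hj => ?_⟩
  rw [S_eq_esymm, S_eq_esymm, ← hy, ← hM]
  have hch1 : (((n - 1).choose j : ℕ) : ℝ) ≠ 0 :=
    Nat.cast_ne_zero.mpr (Nat.choose_pos hj).ne'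
  have hch2 : ((n.choose j : ℕ) : ℝ) ≠ 0 :=
    Nat.cast_ne_zero.mpr (Nat.choose_pos (by omega)).ne'
  have hn0 : (n : ℝ) ≠ 0 := Nat.cast_ne_zero.mpr (by omega)
  have hnat : (n - j) * n.choose j = n * (n - 1).choose j := by
    have a := Nat.choose_succ_right_eq n j
    have b := Nat.add_one_mul_choose_eq (n - 1) j
    simp only [Nat.succ_eq_add_one, Nat.sub_add_cancel hn] at b
    rw [mul_comm, ← a, b]
  have hnatR : ((n - j : ℕ) : ℝ) * (n.choose j : ℝ) = (n : ℝ) * ((n - 1).choose j : ℝ) := by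
    exact_mod_cast congrArg (Nat.cast : ℕ → ℝ) hnat
  have keyj := key j hj
  rw [div_eq_div_iff hch1 hch2]
  apply mul_left_cancel₀ hn0
  linear_combination ((n.choose j : ℕ) : ℝ) * keyj + M.esymm j * hnatR

/-- Newton's inequality in the case `j = 1` (variance inequality), by induction
on `n` using `deriv_step`. -/
lemma newton_one : ∀ n, 2 ≤ n → ∀ x : Fin n → ℝ,
    S n 0 x * S n 2 x ≤ S n 1 x ^ 2 := by
  intro n
  induction n with
  | zero => intro h; omega
  | succ m ih =>
    intro hn x
    rcases eq_or_lt_of_le hn with h2 | h2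
    · obtain rfl : m = 1 := by omega
      have ht : S 2 2 x = x 0 * x 1 := by rw [S_top]; exact Fin.prod_univ_two x
      rw [S_zero, S_one, ht, Fin.sum_univ_two]
      have : ((2:ℕ):ℝ) = 2 := by norm_num
      rw [this]
      nlinarith [sq_nonneg (x 0 - x 1)]
    · obtain ⟨y, hy⟩ := deriv_step (m + 1) (by omega) x
      rw [← hy 0 (by omega), ← hy 2 (by omega), ← hy 1 (by omega)]
      exact ih (by omega) y

/-- Complement identity relating `S_{n-k}(x)` to `S_k(1/x)`. -/
lemma compl_S (n k : ℕ) (hk : k ≤ n) (x : Fin n → ℝ) (hx : ∀ i, x i ≠ 0) :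
    S n (n - k) x = (∏ i, x i) * S n k (fun i => (x i)⁻¹) := by
  have hnum : ∑ t ∈ Finset.univ.powersetCard (n - k), ∏ i ∈ t, x i
      = (∏ i, x i) * ∑ t ∈ Finset.univ.powersetCard k, ∏ i ∈ t, (x i)⁻¹ := by
    rw [Finset.mul_sum]
    apply Finset.sum_nbij' (i := fun t => tᶜ) (j := fun t => tᶜ)
    · intro t ht
      rw [Finset.mem_powersetCard_univ] at ht ⊢
      rw [Finset.card_compl, ht]
      simp
      omega
    · intro t ht
      rw [Finset.mem_powersetCard_univ] at ht ⊢
      rw [Finset.card_compl, ht]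
      simp
    · intro t _; simp
    · intro t _; simp
    · intro t ht
      have hne : ∏ i ∈ tᶜ, x i ≠ 0 := Finset.prod_ne_zero_iff.mpr fun i _ => hx i
      rw [Finset.prod_inv_distrib]
      rw [← Finset.prod_mul_prod_compl t x]
      field_simp
  rw [S, S, hnum, Nat.choose_symm hk, mul_div_assoc]

/-- Newton's inequality at the top level `j = n - 1`. -/
lemma newton_top (n : ℕ) (hn : 2 ≤ n) (x : Fin n → ℝ) :
    S n (n - 2) x * S n n x ≤ S n (n - 1) x ^ 2 := by
  by_cases h0 : ∀ i, x i ≠ 0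
  · have h2 := compl_S n 2 (by omega) x h0
    have h1 := compl_S n 1 (by omega) x h0
    have hnn := compl_S n 0 (by omega) x h0
    rw [Nat.sub_zero, S_zero] at hnn
    rw [h2, h1, hnn]
    have hN := newton_one n hn (fun i => (x i)⁻¹)
    rw [S_zero] at hN
    set P := ∏ i, x i
    calc (P * S n 2 (fun i => (x i)⁻¹)) * (P * 1)
        = P ^ 2 * (1 * S n 2 (fun i => (x i)⁻¹)) := by ring
      _ ≤ P ^ 2 * S n 1 (fun i => (x i)⁻¹) ^ 2 :=
          mul_le_mul_of_nonneg_left hN (sq_nonneg P)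
      _ = (P * S n 1 (fun i => (x i)⁻¹)) ^ 2 := by ring
  · push_neg at h0
    obtain ⟨i, hi⟩ := h0
    have hz : S n n x = 0 := by
      rw [S_top]; exact Finset.prod_eq_zero (Finset.mem_univ i) hi
    rw [hz, mul_zero]
    positivity

/-- Newton's inequality, general form, for arbitrary reals. -/
lemma newtonS : ∀ n (x : Fin n → ℝ) (j : ℕ), 1 ≤ j → j + 1 ≤ n →
    S n (j - 1) x * S n (j + 1) x ≤ S n j x ^ 2 := by
  intro n
  induction n with
  | zero => intro x j h1 h2; omega
  | succ m ih =>
    intro x j h1 h2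
    rcases eq_or_lt_of_le h2 with he | hlt
    · have e0 : j = m := by omega
      rw [e0]
      have hthis := newton_top (m + 1) (by omega) x
      have e1 : m + 1 - 2 = m - 1 := by omega
      have e2 : m + 1 - 1 = m := by omega
      rw [e1, e2] at hthis
      exact hthis
    · obtain ⟨y, hy⟩ := deriv_step (m + 1) (by omega) x
      rw [← hy (j - 1) (by omega), ← hy (j + 1) (by omega), ← hy j (by omega)]
      exact ih y j h1 (by omega)

lemma key_pairing (A B : Finset ℕ) (q : ℕ → ℝ)
    (hA : ∀ i ∈ A, 0 < q i)
    (hle : ∀ i ∈ A, ∀ j ∈ B, q i ≤ q j) :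
    (∏ i ∈ A, q i) ^ B.card ≤ (∏ j ∈ B, q j) ^ A.card := by
  calc (∏ i ∈ A, q i) ^ B.card = ∏ _j ∈ B, ∏ i ∈ A, q i := by rw [Finset.prod_const]
    _ ≤ ∏ j ∈ B, (q j) ^ A.card := by
        apply Finset.prod_le_prod
        · intro j _
          exact Finset.prod_nonneg fun i hi => (hA i hi).le
        · intro j hj
          rw [← Finset.prod_const]
          exact Finset.prod_le_prod (fun i hi => (hA i hi).le)
            (fun i hi => hle i hi j hj)
    _ = (∏ j ∈ B, q j) ^ A.card := by rw [Finset.prod_pow]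

/-- Window comparison for a decreasing positive sequence. -/
lemma window (k l r s : ℕ) (q : ℕ → ℝ) (hq : ∀ j, j < k → 0 < q j)
    (hdec : ∀ i j, i ≤ j → j < k → q j ≤ q i)
    (hsr : s < r) (hlk : l < k) (hrk : r ≤ k) (hsl : s ≤ l) :
    (∏ j ∈ Finset.Ico l k, q j) ^ (r - s) ≤ (∏ j ∈ Finset.Ico s r, q j) ^ (k - l) := by
  have hpos : ∀ (a b : ℕ), b ≤ k → (0:ℝ) ≤ ∏ j ∈ Finset.Ico a b, q j :=
    fun a b hb => Finset.prod_nonneg fun j hj =>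
      (hq j (lt_of_lt_of_le (Finset.mem_Ico.mp hj).2 hb)).le
  rcases le_or_gt (r - s) (k - l) with hmM | hMm
  · have hsplit : (∏ j ∈ Ico l (l + (r - s)), q j) * (∏ j ∈ Ico (l + (r - s)) k, q j)
        = ∏ j ∈ Ico l k, q j := Finset.prod_Ico_consecutive _ (by omega) (by omega)
    have hkey : (∏ j ∈ Ico (l + (r - s)) k, q j) ^ (r - s)
        ≤ (∏ j ∈ Ico l (l + (r - s)), q j) ^ ((k - l) - (r - s)) := by
      have h := key_pairing (Ico (l + (r - s)) k) (Ico l (l + (r - s))) q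
        (fun i hi => hq i (Finset.mem_Ico.mp hi).2)
        (fun i hi j hj => hdec j i (by
          have := (Finset.mem_Ico.mp hi).1; have := (Finset.mem_Ico.mp hj).2; omega)
          (Finset.mem_Ico.mp hi).2)
      rwa [Nat.card_Ico, Nat.card_Ico, show l + (r - s) - l = r - s from by omega,
        show k - (l + (r - s)) = (k - l) - (r - s) from by omega] at h
    have hshift : (∏ j ∈ Ico l (l + (r - s)), q j) ≤ ∏ j ∈ Ico s r, q j := by
      rw [Finset.prod_Ico_eq_prod_range, Finset.prod_Ico_eq_prod_range,
        show l + (r - s) - l = r - s from by omega]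
      exact Finset.prod_le_prod
        (fun i hi => (hq _ (by have := Finset.mem_range.mp hi; omega)).le)
        (fun i hi => hdec (s + i) (l + i) (by omega)
          (by have := Finset.mem_range.mp hi; omega))
    calc (∏ j ∈ Ico l k, q j) ^ (r - s)
        = (∏ j ∈ Ico l (l + (r - s)), q j) ^ (r - s)
            * (∏ j ∈ Ico (l + (r - s)) k, q j) ^ (r - s) := by
          rw [← mul_pow, hsplit]
      _ ≤ (∏ j ∈ Ico l (l + (r - s)), q j) ^ (r - s)
            * (∏ j ∈ Ico l (l + (r - s)), q j) ^ ((k - l) - (r - s)) := by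
          exact mul_le_mul_of_nonneg_left hkey (pow_nonneg (hpos l _ (by omega)) _)
      _ = (∏ j ∈ Ico l (l + (r - s)), q j) ^ (k - l) := by
          rw [← pow_add]; congr 1; omega
      _ ≤ (∏ j ∈ Ico s r, q j) ^ (k - l) :=
          pow_le_pow_left₀ (hpos l _ (by omega)) hshift _
  · have hsplit : (∏ j ∈ Ico s (r - (k - l)), q j) * (∏ j ∈ Ico (r - (k - l)) r, q j)
        = ∏ j ∈ Ico s r, q j := Finset.prod_Ico_consecutive _ (by omega) (by omega)
    have hshift : (∏ j ∈ Ico l k, q j) ≤ ∏ j ∈ Ico (r - (k - l)) r, q j := by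
      rw [Finset.prod_Ico_eq_prod_range, Finset.prod_Ico_eq_prod_range,
        show r - (r - (k - l)) = k - l from by omega]
      exact Finset.prod_le_prod
        (fun i hi => (hq _ (by have := Finset.mem_range.mp hi; omega)).le)
        (fun i hi => hdec (r - (k - l) + i) (l + i) (by omega)
          (by have := Finset.mem_range.mp hi; omega))
    have hkey : (∏ j ∈ Ico (r - (k - l)) r, q j) ^ ((r - s) - (k - l))
        ≤ (∏ j ∈ Ico s (r - (k - l)), q j) ^ (k - l) := by
      have h := key_pairing (Ico (r - (k - l)) r) (Ico s (r - (k - l))) q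
        (fun i hi => hq i (by have := (Finset.mem_Ico.mp hi).2; omega))
        (fun i hi j hj => hdec j i (by
          have := (Finset.mem_Ico.mp hi).1; have := (Finset.mem_Ico.mp hj).2; omega)
          (by have := (Finset.mem_Ico.mp hi).2; omega))
      rwa [Nat.card_Ico, Nat.card_Ico,
        show r - (k - l) - s = (r - s) - (k - l) from by omega,
        show r - (r - (k - l)) = k - l from by omega] at h
    calc (∏ j ∈ Ico l k, q j) ^ (r - s)
        ≤ (∏ j ∈ Ico (r - (k - l)) r, q j) ^ (r - s) :=
          pow_le_pow_left₀ (hpos l k le_rfl) hshift _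
      _ = (∏ j ∈ Ico (r - (k - l)) r, q j) ^ (k - l)
            * (∏ j ∈ Ico (r - (k - l)) r, q j) ^ ((r - s) - (k - l)) := by
          rw [← pow_add]; congr 1; omega
      _ ≤ (∏ j ∈ Ico (r - (k - l)) r, q j) ^ (k - l)
            * (∏ j ∈ Ico s (r - (k - l)), q j) ^ (k - l) := by
          exact mul_le_mul_of_nonneg_left hkey (pow_nonneg (hpos _ r (by omega)) _)
      _ = (∏ j ∈ Ico s r, q j) ^ (k - l) := by
          rw [← mul_pow, mul_comm, hsplit]

theorem generalized_newton_maclaurin (n k l r s : ℕ) (hkn : k ≤ n)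
    (hsr : s < r) (hlk : l < k) (hrk : r ≤ k) (hsl : s ≤ l)
    (lam : Fin n → ℝ) (hlam : lam ∈ Gamma n k) :
    (S n k lam / S n l lam) ^ ((1 : ℝ) / ((k : ℝ) - l)) ≤
      (S n r lam / S n s lam) ^ ((1 : ℝ) / ((r : ℝ) - s)) := by
  have hS : ∀ j, j ≤ k → 0 < S n j lam := by
    intro j hj
    rcases Nat.eq_zero_or_pos j with rfl | hj1
    · rw [S_zero]; norm_num
    · exact hlam j hj1 hj
  set q : ℕ → ℝ := fun j => S n (j + 1) lam / S n j lam with hq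
  have hqpos : ∀ j, j < k → 0 < q j := fun j hj =>
    div_pos (hS _ (by omega)) (hS _ (by omega))
  have hstep : ∀ j, j + 1 < k → q (j + 1) ≤ q j := by
    intro j hj
    have hN := newtonS n lam (j + 1) (by omega) (by omega)
    simp only [Nat.add_sub_cancel] at hN
    rw [hq]
    rw [div_le_div_iff₀ (hS _ (by omega)) (hS _ (by omega))]
    nlinarith [hN]
  have hdec : ∀ i j, i ≤ j → j < k → q j ≤ q i := by
    intro i j hij hjk
    obtain ⟨d, rfl⟩ := Nat.exists_eq_add_of_le hij
    clear hij
    induction d with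
    | zero => exact le_refl _
    | succ e ihe =>
      have h1 : q (i + e + 1) ≤ q (i + e) := hstep (i + e) (by omega)
      have h2 : q (i + e) ≤ q i := ihe (by omega)
      calc q (i + (e + 1)) = q (i + e + 1) := by ring_nf
        _ ≤ q (i + e) := h1
        _ ≤ q i := h2
  have htel : ∀ b, b ≤ k → ∀ a, a ≤ b →
      ∏ j ∈ Finset.Ico a b, q j = S n b lam / S n a lam := by
    intro b
    induction b with
    | zero =>
      intro _ a ha
      obtain rfl : a = 0 := by omega
      simp [div_self (hS 0 (by omega)).ne']
    | succ c ihc =>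
      intro hbk a ha
      rcases eq_or_lt_of_le ha with rfl | hlt
      · simp [div_self (hS _ hbk).ne']
      · have hac : a ≤ c := by omega
        rw [Finset.prod_Ico_succ_top hac, ihc (by omega) a hac, hq]
        have h1 : S n c lam ≠ 0 := (hS c (by omega)).ne'
        have h2 : S n a lam ≠ 0 := (hS a (by omega)).ne'
        field_simp
  have A := window k l r s q hqpos hdec hsr hlk hrk hsl
  rw [htel k le_rfl l hlk.le, htel r hrk s hsr.le] at A
  have hX : 0 < S n k lam / S n l lam := div_pos (hS k le_rfl) (hS l (by omega))
  have hY : 0 < S n r lam / S n s lam := div_pos (hS r hrk) (hS s (by omega))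
  set X := S n k lam / S n l lam
  set Y := S n r lam / S n s lam
  have hcast1 : (k : ℝ) - l = ((k - l : ℕ) : ℝ) := by
    rw [Nat.cast_sub hlk.le]
  have hcast2 : (r : ℝ) - s = ((r - s : ℕ) : ℝ) := by
    rw [Nat.cast_sub hsr.le]
  rw [hcast1, hcast2]
  have hMR : ((k - l : ℕ) : ℝ) ≠ 0 := Nat.cast_ne_zero.mpr (by omega)
  have hmR : ((r - s : ℕ) : ℝ) ≠ 0 := Nat.cast_ne_zero.mpr (by omega)
  have A' : X ^ ((r - s : ℕ) : ℝ) ≤ Y ^ ((k - l : ℕ) : ℝ) := by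
    rw [Real.rpow_natCast, Real.rpow_natCast]
    exact A
  have h2 := Real.rpow_le_rpow (Real.rpow_nonneg hX.le _) A'
    (show (0:ℝ) ≤ 1 / (((k - l : ℕ) : ℝ) * ((r - s : ℕ) : ℝ)) by positivity)
  rw [← Real.rpow_mul hX.le, ← Real.rpow_mul hY.le] at h2
  have e1 : ((r - s : ℕ) : ℝ) * (1 / (((k - l : ℕ) : ℝ) * ((r - s : ℕ) : ℝ)))
      = 1 / ((k - l : ℕ) : ℝ) := by field_simp
  have e2 : ((k - l : ℕ) : ℝ) * (1 / (((k - l : ℕ) : ℝ) * ((r - s : ℕ) : ℝ)))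
      = 1 / ((r - s : ℕ) : ℝ) := by field_simp
  rw [e1, e2] at h2
  exact h2
end

section
/- If λ = (λ₁,…,λₙ) ∈ Γ_k with λ₁ ≥ λ₂ ≥ ⋯ ≥ λₙ, then the partial derivatives of S_k are ordered oppositely: ∂S_k/∂λ₁ ≤ ∂S_k/∂λ₂ ≤ ⋯ ≤ ∂S_k/∂λₙ. -/
theorem Nat.choose_mul_choose_add_two_le_sq (m j : ℕ) :
    m.choose j * m.choose (j + 2) ≤ m.choose (j + 1) ^ 2 := by
  rcases lt_or_ge m (j + 2) with hm | hm
  · simp [Nat.choose_eq_zero_of_lt hm]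
  obtain ⟨d, rfl⟩ : ∃ d, m = d + j + 2 := ⟨m - (j + 2), by omega⟩
  have h1 : (d + j + 2).choose (j + 1) * (j + 1) = (d + j + 2).choose j * (d + 2) := by
    rw [Nat.choose_succ_right_eq]; congr 1; omega
  have h2 : (d + j + 2).choose (j + 2) * (j + 2) = (d + j + 2).choose (j + 1) * (d + 1) := by
    rw [Nat.choose_succ_right_eq]; congr 1; omega
  refine Nat.le_of_mul_le_mul_right (c := (d + 2) * (j + 2)) ?_ (by positivity)
  calc _ = (d + j + 2).choose j * (d + 2) * ((d + j + 2).choose (j + 2) * (j + 2)) := by ring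
    _ = (d + j + 2).choose (j + 1) ^ 2 * ((j + 1) * (d + 1)) := by rw [← h1, h2]; ring
    _ ≤ (d + j + 2).choose (j + 1) ^ 2 * ((d + 2) * (j + 2)) := Nat.mul_le_mul_left _ (by nlinarith)

namespace Multiset

section CommSemiring
variable {R : Type*} [CommSemiring R]

@[simp] theorem esymm_zero (s : Multiset R) : s.esymm 0 = 1 := by
  simp [esymm]

theorem esymm_cons_succ (a : R) (s : Multiset R) (k : ℕ) :
    (a ::ₘ s).esymm (k + 1) = s.esymm (k + 1) + a * s.esymm k := by
  simp [esymm, map_map, sum_map_mul_left]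

theorem esymm_eq_zero_of_card_lt {s : Multiset R} {k : ℕ} (h : card s < k) : s.esymm k = 0 := by
  simp [esymm, powersetCard_eq_empty _ h]

theorem esymm_card (s : Multiset R) : s.esymm (card s) = s.prod := by
  simp [esymm, powersetCard_self]

end CommSemiring

theorem esymm_map_inv_mul_prod {K : Type*} [Field K] {s : Multiset K} (hs : (0 : K) ∉ s)
    {i l : ℕ} (hil : i + l = card s) : (s.map (·⁻¹)).esymm i * s.prod = s.esymm l := by
  induction s using Multiset.induction_on generalizing i l with
  | empty => simp_all
  | cons a t ih =>
    rcases l with _ | l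
    · rw [add_zero, ← card_map (·⁻¹)] at hil
      rw [hil, esymm_card, prod_map_inv', inv_mul_cancel₀ (prod_ne_zero hs), esymm_zero]
    rcases i with _ | i
    · rw [zero_add] at hil
      rw [hil, esymm_card, esymm_zero, one_mul]
    have ha : a ≠ 0 := fun h => hs (h ▸ mem_cons_self a t)
    have ht : (0 : K) ∉ t := fun h => hs (mem_cons_of_mem h)
    rw [card_cons] at hil
    rw [map_cons, esymm_cons_succ, prod_cons, esymm_cons_succ,
      ← ih ht (by omega : i + (l + 1) = card t), ← ih ht (by omega : i + 1 + l = card t)]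
    field_simp
    ring

open Polynomial in
theorem exists_card_eq_mul_esymm_eq (s : Multiset ℝ) {m : ℕ} (hs : card s = m + 1) :
    ∃ t : Multiset ℝ, card t = m ∧
      ∀ i ≤ m, (m + 1 : ℝ) * t.esymm i = (m + 1 - i : ℕ) * s.esymm i := by
  set p : ℝ[X] := (s.map fun r => X - C r).prod
  have hp_monic : p.Monic := monic_multiset_prod_of_monic _ _ fun r _ => monic_X_sub_C r
  have hp_deg : p.natDegree = m + 1 := by
    rw [natDegree_multiset_prod_X_sub_C_eq_card, hs]
  have hdeg : (derivative p).natDegree = m := by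
    rw [natDegree_derivative, hp_deg, Nat.add_sub_cancel]
  have hroots : card (derivative p).roots = (derivative p).natDegree := by
    refine le_antisymm (card_roots' _) ?_
    have := card_roots_le_derivative p
    rw [roots_multiset_prod_X_sub_C, hs] at this
    omega
  refine ⟨(derivative p).roots, hroots.trans hdeg, fun i hi => ?_⟩
  have hcoeff := coeff_eq_esymm_roots_of_card hroots (k := m - i) (by omega)
  rw [coeff_derivative, show m - i + 1 = card s - i by omega, prod_X_sub_C_coeff s (by omega),
    leadingCoeff_derivative, hp_monic.leadingCoeff, hp_deg, hdeg,
    show card s - (card s - i) = i by omega, show m - (m - i) = i by omega] at hcoeff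
  refine mul_left_cancel₀ (pow_ne_zero i (neg_ne_zero.2 one_ne_zero) : (-1 : ℝ) ^ i ≠ 0) ?_
  rw [show m + 1 - i = m - i + 1 by omega]
  push_cast at hcoeff ⊢
  linear_combination -hcoeff

noncomputable def esymmMean (s : Multiset ℝ) (k : ℕ) : ℝ := s.esymm k / (card s).choose k

theorem esymm_eq_esymmMean_mul (s : Multiset ℝ) (k : ℕ) :
    s.esymm k = s.esymmMean k * (card s).choose k := by
  rcases lt_or_ge (card s) k with h | h
  · simp [esymmMean, esymm_eq_zero_of_card_lt h, Nat.choose_eq_zero_of_lt h]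
  · rw [esymmMean, div_mul_cancel₀ _ (Nat.cast_ne_zero.2 (Nat.choose_pos h).ne')]

theorem esymmMean_eq_zero_of_card_lt {s : Multiset ℝ} {k : ℕ} (h : card s < k) :
    s.esymmMean k = 0 := by
  simp [esymmMean, esymm_eq_zero_of_card_lt h]

theorem exists_card_eq_esymmMean_eq_of_card_eq_succ (s : Multiset ℝ) {m : ℕ}
    (hs : card s = m + 1) :
    ∃ t : Multiset ℝ, card t = m ∧ ∀ i ≤ m, t.esymmMean i = s.esymmMean i := by
  obtain ⟨t, ht, hts⟩ := exists_card_eq_mul_esymm_eq s hs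
  refine ⟨t, ht, fun i hi => ?_⟩
  have hchoose : (m.choose i * (m + 1) : ℝ) = (m + 1).choose i * ((m + 1 - i : ℕ) : ℝ) := by
    exact_mod_cast Nat.choose_mul_succ_eq m i
  rw [esymmMean, esymmMean, ht, hs, div_eq_div_iff (Nat.cast_ne_zero.2 (Nat.choose_pos hi).ne')
    (Nat.cast_ne_zero.2 (Nat.choose_pos (by omega)).ne')]
  refine mul_right_cancel₀ (Nat.cast_add_one_ne_zero m) ?_
  linear_combination ((m + 1).choose i : ℝ) * hts i hi - s.esymm i * hchoose

theorem exists_card_eq_esymmMean_eq (s : Multiset ℝ) {d : ℕ} (hd : d ≤ card s) :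
    ∃ t : Multiset ℝ, card t = d ∧ ∀ i ≤ d, t.esymmMean i = s.esymmMean i := by
  obtain ⟨n, hn⟩ : ∃ n, card s = d + n := ⟨card s - d, by omega⟩
  clear hd
  induction n generalizing s with
  | zero => exact ⟨s, hn, fun _ _ => rfl⟩
  | succ n ih =>
    obtain ⟨s', hs', hss'⟩ := exists_card_eq_esymmMean_eq_of_card_eq_succ s (m := d + n) (by omega)
    obtain ⟨t, ht, hts'⟩ := ih s' hs'
    exact ⟨t, ht, fun i hi => (hts' i hi).trans (hss' i (by omega))⟩

theorem esymmMean_two_le_sq (s : Multiset ℝ) : s.esymmMean 2 ≤ s.esymmMean 1 ^ 2 := by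
  rcases lt_or_ge (card s) 2 with hs | hs
  · rw [esymmMean_eq_zero_of_card_lt hs]
    positivity
  obtain ⟨t, ht, hts⟩ := exists_card_eq_esymmMean_eq s hs
  obtain ⟨x, y, rfl⟩ := card_eq_two.1 ht
  rw [← hts 1 (by norm_num), ← hts 2 le_rfl, esymmMean, esymmMean, ht, insert_eq_cons,
    esymm_pair_one, esymm_pair_two]
  norm_num
  nlinarith [sq_nonneg (x - y)]

theorem esymmMean_map_inv_mul_prod {s : Multiset ℝ} (hs : (0 : ℝ) ∉ s) {i l : ℕ}
    (hil : i + l = card s) : (s.map (·⁻¹)).esymmMean i * s.prod = s.esymmMean l := by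
  rw [esymmMean, esymmMean, card_map, div_mul_eq_mul_div, esymm_map_inv_mul_prod hs hil, ← hil,
    Nat.choose_symm_add]

theorem esymmMean_mul_le_sq (s : Multiset ℝ) (j : ℕ) :
    s.esymmMean j * s.esymmMean (j + 2) ≤ s.esymmMean (j + 1) ^ 2 := by
  rcases lt_or_ge (card s) (j + 2) with hs | hs
  · rw [esymmMean_eq_zero_of_card_lt hs, mul_zero]
    positivity
  obtain ⟨t, ht, hts⟩ := exists_card_eq_esymmMean_eq s hs
  rw [← hts j (by omega), ← hts (j + 1) (by omega), ← hts (j + 2) le_rfl]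
  by_cases h0 : (0 : ℝ) ∈ t
  · have h_top : t.esymmMean (j + 2) = 0 := by
      rw [← ht, esymmMean, esymm_card, prod_eq_zero h0, zero_div]
    rw [h_top, mul_zero]
    positivity
  have e0 := esymmMean_map_inv_mul_prod h0 (i := 0) (l := j + 2) (by omega)
  have e1 := esymmMean_map_inv_mul_prod h0 (i := 1) (l := j + 1) (by omega)
  have e2 := esymmMean_map_inv_mul_prod h0 (i := 2) (l := j) (by omega)
  rw [esymmMean, esymm_zero, Nat.choose_zero_right, Nat.cast_one, div_one, one_mul] at e0
  rw [← e0, ← e1, ← e2]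
  nlinarith [mul_le_mul_of_nonneg_right (esymmMean_two_le_sq (t.map (·⁻¹))) (sq_nonneg t.prod)]

theorem esymm_mul_esymm_add_two_le_sq (s : Multiset ℝ) (j : ℕ) :
    s.esymm j * s.esymm (j + 2) ≤ s.esymm (j + 1) ^ 2 := by
  have hchoose :
      ((card s).choose j * (card s).choose (j + 2) : ℝ) ≤ (card s).choose (j + 1) ^ 2 := by
    exact_mod_cast Nat.choose_mul_choose_add_two_le_sq (card s) j
  simp only [esymm_eq_esymmMean_mul s]
  calc _ = s.esymmMean j * s.esymmMean (j + 2) * ((card s).choose j * (card s).choose (j + 2)) := by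
        ring
    _ ≤ s.esymmMean (j + 1) ^ 2 * (card s).choose (j + 1) ^ 2 :=
        mul_le_mul (esymmMean_mul_le_sq s j) hchoose (by positivity) (sq_nonneg _)
    _ = _ := by ring

theorem esymm_pos_of_esymm_cons_pos {a : ℝ} {s : Multiset ℝ} {k : ℕ}
    (h : ∀ j ≤ k + 1, 0 < (a ::ₘ s).esymm j) : ∀ j ≤ k, 0 < s.esymm j := by
  induction k with
  | zero => simp
  | succ k ih =>
    have hk := ih fun j hj => h j (by omega)
    intro j hj
    rcases hj.lt_or_eq with hj | rfl
    · exact hk j (by omega)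
    have h1 := h (k + 1) (by omega)
    have h2 := h (k + 2) le_rfl
    rw [esymm_cons_succ] at h1 h2
    by_contra! hle
    nlinarith [esymm_mul_esymm_add_two_le_sq s k, mul_pos (hk k le_rfl) h2,
      mul_nonneg (neg_nonneg.2 hle) h1.le]

end Multiset

theorem Finset.map_val_eq_cons_map_erase {ι α : Type*} [DecidableEq ι] {s : Finset ι} {i : ι}
    (hi : i ∈ s) (f : ι → α) : s.val.map f = f i ::ₘ (s.erase i).val.map f := by
  rw [← Multiset.map_cons, Finset.erase_val, Multiset.cons_erase hi]

open Finset

section SymmetricFunction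

variable {n : ℕ}

theorem S_eq_esymm_div (k : ℕ) (x : Fin n → ℝ) :
    S n k x = (univ.val.map x).esymm k / n.choose k := by
  rw [S, Finset.esymm_map_val]

theorem differentiable_S (k : ℕ) : Differentiable ℝ (S n k) := by
  unfold S
  fun_prop

theorem esymm_pos_of_mem_Gamma {k : ℕ} {x : Fin n → ℝ} (hx : x ∈ Gamma n k) :
    ∀ j ≤ k, 0 < (univ.val.map x).esymm j := by
  intro j hj
  rcases j.eq_zero_or_pos with rfl | hj0
  · simp
  have h := hx j hj0 hj
  rw [S_eq_esymm_div] at h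
  exact lt_of_not_ge fun h' => (div_nonpos_of_nonpos_of_nonneg h' (Nat.cast_nonneg _)).not_gt h

theorem S_add_smul_single (k : ℕ) (x : Fin n → ℝ) (i : Fin n) (t : ℝ) :
    S n (k + 1) (x + t • Pi.single i 1) =
      (((univ.erase i).val.map x).esymm (k + 1) + (x i + t) * ((univ.erase i).val.map x).esymm k)
        / n.choose (k + 1) := by
  have hoff : (univ.erase i).val.map (x + t • Pi.single i 1) = (univ.erase i).val.map x :=
    Multiset.map_congr rfl fun y hy => by simp [ne_of_mem_erase (show y ∈ univ.erase i from hy)]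
  rw [S_eq_esymm_div, map_val_eq_cons_map_erase (mem_univ i), hoff, Multiset.esymm_cons_succ]
  simp

theorem fderiv_S_single (k : ℕ) (x : Fin n → ℝ) (i : Fin n) :
    fderiv ℝ (S n (k + 1)) x (Pi.single i 1) =
      ((univ.erase i).val.map x).esymm k / n.choose (k + 1) := by
  have hline : HasLineDerivAt ℝ (S n (k + 1))
      (((univ.erase i).val.map x).esymm k / n.choose (k + 1)) x (Pi.single i 1) := by
    simp only [HasLineDerivAt, S_add_smul_single]
    simpa using ((((hasDerivAt_id (0 : ℝ)).const_add (x i)).mul_const _).const_add _).div_const _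
  exact ((differentiable_S _ x).hasFDerivAt.hasLineDerivAt _).unique hline

end SymmetricFunction

theorem partial_Sk_antitone_general (n k : ℕ) (hk1 : 1 ≤ k)
    (lam : Fin n → ℝ) (hlam : lam ∈ Gamma n k)
    (hsort : ∀ i j : Fin n, i ≤ j → lam j ≤ lam i) :
    ∀ i j : Fin n, i ≤ j →
      fderiv ℝ (S n k) lam (Pi.single i 1) ≤ fderiv ℝ (S n k) lam (Pi.single j 1) := by
  obtain ⟨r, rfl⟩ := Nat.exists_eq_add_of_le' hk1
  intro i j hij
  rcases hij.eq_or_lt with rfl | hlt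
  · exact le_rfl
  set rest := ((univ.erase i).erase j).val.map lam
  have hj : j ∈ univ.erase i := mem_erase.2 ⟨hlt.ne', mem_univ j⟩
  have hi : i ∈ univ.erase j := mem_erase.2 ⟨hlt.ne, mem_univ i⟩
  have h_erase_i : (univ.erase i).val.map lam = lam j ::ₘ rest := map_val_eq_cons_map_erase hj lam
  have h_erase_j : (univ.erase j).val.map lam = lam i ::ₘ rest := by
    rw [map_val_eq_cons_map_erase hi lam, erase_right_comm]
  have hpos := esymm_pos_of_mem_Gamma hlam
  rw [map_val_eq_cons_map_erase (mem_univ i), h_erase_i] at hpos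
  rw [fderiv_S_single, fderiv_S_single, h_erase_i, h_erase_j]
  gcongr ?_ / _
  rcases r with _ | q
  · simp
  have hrest := Multiset.esymm_pos_of_esymm_cons_pos (Multiset.esymm_pos_of_esymm_cons_pos hpos)
  rw [Multiset.esymm_cons_succ, Multiset.esymm_cons_succ]
  gcongr
  · exact (hrest q le_rfl).le
  · exact hsort i j hij

theorem partial_Sk_antitone (n k : ℕ) (hk1 : 1 ≤ k) (hkn : k ≤ n)
    (lam : Fin n → ℝ) (hlam : lam ∈ Gamma n k)
    (hsort : ∀ i j : Fin n, i ≤ j → lam j ≤ lam i) :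
    ∀ i j : Fin n, i ≤ j →
      fderiv ℝ (S n k) lam (Pi.single i 1) ≤ fderiv ℝ (S n k) lam (Pi.single j 1) :=
  partial_Sk_antitone_general n k hk1 lam hlam hsort
end
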